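/- Let k be an algebraically closed field, let M := ℤ^n (for some n ≥ 1, written additively), and let S be a finitely generated submonoid of M that generates M as a group. In the monoid algebra k[M] (the algebra of finitely supported functions M → k with convolution product), let A := {f ∈ k[M] : supp(f) ⊆ S}, which is a k-subalgebra (the image of k[S]). Then A is seminormal in k[M] — i.e. every f ∈ k[M] with f² ∈ A and f³ ∈ A lies in A — if and only if S is semisaturated in M. -/

import Mathlib

/-!
Put `F := supp f² ∪ supp f³`; it suffices to show that every `m ∈ supp f` has `N • m ∈ ⟨F⟩` for
all large `N`, because a semisaturated `S ⊇ ⟨F⟩` then contains `m` (descend from `2N` and `3N`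
to `N`).

By Farkas' lemma over `ℚ` there is a functional `Y ≥ 0` on `F` with `Y m ≤ 0` that exposes the
smallest face of the cone of `⟨F⟩` containing `m`: each generator `a` with `Y a = 0` satisfies
`t • m - a ∈ ⟨F⟩` for some `t`. Lowest `Y`-components multiply in the domain `k[M]`, so `Y ≥ 0`
on `supp f` (hence `Y m = 0`), and the part `f₀` of `f` on `Y = 0` has `f₀²`, `f₀³` supported in
the group `U` generated by the face. The component of `f₀³ = f₀ · f₀²` on the coset `m + U` is
nonzero, so `m ∈ U`. Writing `m = a - b` with `a, b` in the face, `m + b ∈ ⟨F⟩` and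
`q • m - b ∈ ⟨F⟩` give `N • m ∈ ⟨F⟩` for all `N ≥ q²`.
-/

open Filter

namespace AddSubmonoid

def IsSemisaturated {M : Type*} [AddMonoid M] (S : AddSubmonoid M) : Prop :=
  ∀ m, 2 • m ∈ S → 3 • m ∈ S → m ∈ S

lemma IsSemisaturated.mem_of_eventually_nsmul_mem {M : Type*} [AddMonoid M]
    {S : AddSubmonoid M} (hS : S.IsSemisaturated) {m : M}
    (h : ∀ᶠ N : ℕ in atTop, N • m ∈ S) : m ∈ S := by
  obtain ⟨K, hK⟩ := eventually_atTop.1 h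
  induction K using Nat.strong_induction_on with
  | _ K ih =>
    by_cases hK1 : K ≤ 1
    · simpa using hK 1 hK1
    refine ih ((K + 1) / 2) (by omega) fun N hN ↦ hS _ ?_ ?_
    · rw [← mul_nsmul']; exact hK _ (by omega)
    · rw [← mul_nsmul']; exact hK _ (by omega)

lemma eventually_nsmul_mem_of_add_mem_of_nsmul_sub_mem {M : Type*} [AddCommGroup M]
    {S : AddSubmonoid M} {m b : M} {q : ℕ} (hb : b ∈ S) (hmb : m + b ∈ S)
    (hq : q • m - b ∈ S) : ∀ᶠ N : ℕ in atTop, N • m ∈ S := by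
  refine eventually_atTop.2 ⟨q * q, fun N hN ↦ ?_⟩
  obtain ⟨x, y, hxy, rfl⟩ : ∃ x y, x ≤ y ∧ N = x + q * y := by
    rcases q.eq_zero_or_pos with rfl | hq
    · exact ⟨N, N, le_rfl, by simp⟩
    · exact ⟨N % q, N / q, (N.mod_lt hq).le.trans ((Nat.le_div_iff_mul_le hq).2 hN),
        (N.mod_add_div q).symm⟩
  obtain ⟨z, rfl⟩ := Nat.exists_eq_add_of_le hxy
  have : (x + q * (x + z)) • m = x • (m + b) + (x + z) • (q • m - b) + z • b := by module
  rw [this]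
  exact add_mem (add_mem (nsmul_mem hmb x) (nsmul_mem hq _)) (nsmul_mem hb z)

lemma exists_nsmul_sub_mem_of_mem_closure {M : Type*} [AddCommGroup M] {S : AddSubmonoid M}
    {m : M} {s : Set M} (hs : ∀ a ∈ s, ∃ t : ℕ, t • m - a ∈ S) {x : M} (hx : x ∈ closure s) :
    ∃ t : ℕ, t • m - x ∈ S := by
  induction hx using closure_induction with
  | mem a ha => exact hs a ha
  | zero => exact ⟨0, by simp⟩
  | add x y _ _ ihx ihy =>
    obtain ⟨t, ht⟩ := ihx
    obtain ⟨t', ht'⟩ := ihy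
    refine ⟨t + t', ?_⟩
    convert S.add_mem ht ht' using 1
    module

lemma exists_sub_eq_of_mem_addSubgroupClosure {M : Type*} [AddCommGroup M] {P : AddSubmonoid M}
    {x : M} (hx : x ∈ AddSubgroup.closure (P : Set M)) : ∃ a ∈ P, ∃ b ∈ P, a - b = x := by
  induction hx using AddSubgroup.closure_induction with
  | mem x hx => exact ⟨x, hx, 0, P.zero_mem, sub_zero x⟩
  | zero => exact ⟨0, P.zero_mem, 0, P.zero_mem, sub_zero 0⟩
  | add x y _ _ ihx ihy =>
    obtain ⟨a, ha, b, hb, rfl⟩ := ihx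
    obtain ⟨a', ha', b', hb', rfl⟩ := ihy
    exact ⟨a + a', P.add_mem ha ha', b + b', P.add_mem hb hb', add_sub_add_comm a a' b b'⟩
  | neg x _ ihx =>
    obtain ⟨a, ha, b, hb, rfl⟩ := ihx
    exact ⟨b, hb, a, ha, (neg_sub a b).symm⟩

section OrderedHom

variable {M Γ : Type*} [AddMonoid M] [AddCommMonoid Γ] [PartialOrder Γ] [IsOrderedAddMonoid Γ]
  (Y : M →+ Γ) {s : Set M}

lemma map_nonneg_of_mem_closure (hs : ∀ a ∈ s, 0 ≤ Y a) {x : M} (hx : x ∈ closure s) :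
    0 ≤ Y x := by
  induction hx using closure_induction with
  | mem a ha => exact hs a ha
  | zero => simp
  | add x y _ _ hx hy => simpa using add_nonneg hx hy

lemma mem_closure_setOf_map_eq_zero (hs : ∀ a ∈ s, 0 ≤ Y a) {x : M} (hx : x ∈ closure s)
    (hYx : Y x = 0) : x ∈ closure {a ∈ s | Y a = 0} := by
  induction hx using closure_induction with
  | mem a ha => exact subset_closure ⟨ha, hYx⟩
  | zero => exact zero_mem _
  | add x y hx hy ihx ihy =>
    rw [map_add, add_eq_zero_iff_of_nonneg (map_nonneg_of_mem_closure Y hs hx)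
      (map_nonneg_of_mem_closure Y hs hy)] at hYx
    exact add_mem (ihx hYx.1) (ihy hYx.2)

end OrderedHom

end AddSubmonoid

namespace AddMonoidAlgebra

variable {k M : Type*} [Semiring k]

noncomputable def filter (p : M → Prop) [DecidablePred p] (f : AddMonoidAlgebra k M) :
    AddMonoidAlgebra k M :=
  ofCoeff (f.coeff.filter p)

lemma coeff_support_nonempty_iff {f : AddMonoidAlgebra k M} : f.coeff.support.Nonempty ↔ f ≠ 0 :=
  Finsupp.support_nonempty_iff.trans coeff_eq_zero.not

section Filter

variable (p : M → Prop) [DecidablePred p]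

@[simp]
lemma mem_support_filter {f : AddMonoidAlgebra k M} {x : M} :
    x ∈ (filter p f).coeff.support ↔ x ∈ f.coeff.support ∧ p x :=
  Finset.mem_filter

lemma filter_add (f g : AddMonoidAlgebra k M) : filter p (f + g) = filter p f + filter p g :=
  congrArg ofCoeff Finsupp.filter_add

lemma filter_add_filter_not (f : AddMonoidAlgebra k M) : filter p f + filter (¬p ·) f = f :=
  congrArg ofCoeff (Finsupp.filter_add_filter_not f.coeff p)

lemma filter_eq_self {f : AddMonoidAlgebra k M} (h : ∀ x ∈ f.coeff.support, p x) :
    filter p f = f :=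
  congrArg ofCoeff <|
    (Finsupp.filter_eq_self_iff _ _).2 fun x hx ↦ h x (Finsupp.mem_support_iff.2 hx)

lemma filter_eq_zero {f : AddMonoidAlgebra k M} (h : ∀ x ∈ f.coeff.support, ¬p x) :
    filter p f = 0 :=
  ofCoeff_eq_zero.2 <| (Finsupp.filter_eq_zero_iff _ _).2 fun x hx ↦
    Finsupp.notMem_support_iff.1 fun hm ↦ h x hm hx

variable [AddCommMonoid M]

lemma exists_add_of_mem_support_mul [DecidableEq M] {f g : AddMonoidAlgebra k M} {u : M}
    (hu : u ∈ (f * g).coeff.support) :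
    ∃ x ∈ f.coeff.support, ∃ y ∈ g.coeff.support, x + y = u :=
  Finset.mem_add.1 (support_coeff_mul_subset f g hu)

lemma filter_mul_eq_self {f g : AddMonoidAlgebra k M}
    (h : ∀ x ∈ f.coeff.support, ∀ y ∈ g.coeff.support, p (x + y)) :
    filter p (f * g) = f * g := by
  classical
  refine filter_eq_self p fun u hu ↦ ?_
  obtain ⟨x, hx, y, hy, rfl⟩ := exists_add_of_mem_support_mul hu
  exact h x hx y hy

lemma filter_mul_eq_zero {f g : AddMonoidAlgebra k M}
    (h : ∀ x ∈ f.coeff.support, ∀ y ∈ g.coeff.support, ¬p (x + y)) :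
    filter p (f * g) = 0 := by
  classical
  refine filter_eq_zero p fun u hu ↦ ?_
  obtain ⟨x, hx, y, hy, rfl⟩ := exists_add_of_mem_support_mul hu
  exact h x hx y hy

lemma filter_mul_of_forall_add_iff {f g : AddMonoidAlgebra k M}
    (hg : ∀ y ∈ g.coeff.support, ∀ x, p (x + y) ↔ p x) :
    filter p (f * g) = filter p f * g := by
  conv_lhs => rw [← filter_add_filter_not p f, add_mul, filter_add]
  rw [filter_mul_eq_self p fun x hx y hy ↦ ?_, filter_mul_eq_zero p fun x hx y hy ↦ ?_, add_zero]
  · exact fun h ↦ (mem_support_filter (¬p ·) |>.1 hx).2 ((hg y hy x).1 h)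
  · exact (hg y hy x).2 (mem_support_filter p |>.1 hx).2

end Filter

section LowestComponent

variable [AddCommMonoid M] {Γ : Type*} [AddCommMonoid Γ] [LinearOrder Γ]
  [IsOrderedCancelAddMonoid Γ] (ψ : M →+ Γ)

lemma filter_mul_of_le {d e : Γ} {f g : AddMonoidAlgebra k M}
    (hf : ∀ x ∈ f.coeff.support, d ≤ ψ x) (hg : ∀ y ∈ g.coeff.support, e ≤ ψ y) :
    filter (ψ · = d + e) (f * g) = filter (ψ · = d) f * filter (ψ · = e) g := by
  have hlt_f : ∀ x ∈ (filter (¬ψ · = d) f).coeff.support, d < ψ x := fun x hx ↦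
    have hx := (mem_support_filter _).1 hx; lt_of_le_of_ne (hf x hx.1) (Ne.symm hx.2)
  have hlt_g : ∀ y ∈ (filter (¬ψ · = e) g).coeff.support, e < ψ y := fun y hy ↦
    have hy := (mem_support_filter _).1 hy; lt_of_le_of_ne (hg y hy.1) (Ne.symm hy.2)
  conv_lhs =>
    rw [← filter_add_filter_not (ψ · = d) f, add_mul, filter_add]
    arg 1
    rw [← filter_add_filter_not (ψ · = e) g, mul_add, filter_add]
  rw [filter_mul_eq_self _ fun x hx y hy ↦ ?_, filter_mul_eq_zero _ fun x hx y hy ↦ ?_,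
    filter_mul_eq_zero _ fun x hx y hy ↦ ?_, add_zero, add_zero]
  · exact (map_add ψ x y).trans_ne (add_lt_add_of_lt_of_le (hlt_f x hx) (hg y hy)).ne'
  · exact (map_add ψ x y).trans_ne (add_lt_add_of_le_of_lt
      ((mem_support_filter _).1 hx).2.ge (hlt_g y hy)).ne'
  · rw [map_add, ((mem_support_filter _).1 hx).2, ((mem_support_filter _).1 hy).2]

lemma filter_mul_of_nonneg {f g : AddMonoidAlgebra k M}
    (hf : ∀ x ∈ f.coeff.support, 0 ≤ ψ x) (hg : ∀ y ∈ g.coeff.support, 0 ≤ ψ y) :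
    filter (ψ · = 0) (f * g) = filter (ψ · = 0) f * filter (ψ · = 0) g := by
  simpa using filter_mul_of_le ψ hf hg

lemma map_nonneg_of_mem_support_of_mul_self [NoZeroDivisors (AddMonoidAlgebra k M)]
    {f : AddMonoidAlgebra k M} (h : ∀ u ∈ (f * f).coeff.support, 0 ≤ ψ u)
    {x : M} (hx : x ∈ f.coeff.support) : 0 ≤ ψ x := by
  obtain ⟨x₀, hx₀, hmin⟩ := f.coeff.support.exists_min_image ψ ⟨x, hx⟩
  refine le_trans ?_ (hmin x hx)
  by_contra! hneg
  have hne : filter (ψ · = ψ x₀) f ≠ 0 :=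
    coeff_support_nonempty_iff.1 ⟨x₀, (mem_support_filter _).2 ⟨hx₀, rfl⟩⟩
  obtain ⟨u, hu⟩ := coeff_support_nonempty_iff.2 <|
    (filter_mul_of_le ψ hmin hmin).trans_ne (mul_ne_zero hne hne)
  obtain ⟨hu, hψu⟩ := (mem_support_filter _).1 hu
  exact (h u hu).not_gt (hψu ▸ Left.add_neg hneg hneg)

end LowestComponent

lemma support_subset_of_pow_two_of_pow_three {M : Type*} [AddCommGroup M]
    [NoZeroDivisors (AddMonoidAlgebra k M)] (U : AddSubgroup M) {f : AddMonoidAlgebra k M}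
    (h2 : ((f ^ 2).coeff.support : Set M) ⊆ U) (h3 : ((f ^ 3).coeff.support : Set M) ⊆ U) :
    (f.coeff.support : Set M) ⊆ U := by
  classical
  intro m hm
  have hf : f ≠ 0 := coeff_support_nonempty_iff.1 ⟨m, hm⟩
  have hcoset : filter (· - m ∈ U) (f ^ 3) = filter (· - m ∈ U) f * f ^ 2 := by
    refine pow_succ' f 2 ▸ filter_mul_of_forall_add_iff _ fun y hy x ↦ ?_
    rw [add_sub_right_comm]
    exact U.add_mem_cancel_right (h2 hy)
  have hne : filter (· - m ∈ U) f ≠ 0 :=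
    coeff_support_nonempty_iff.1 ⟨m, (mem_support_filter _).2 ⟨hm, by simp⟩⟩
  obtain ⟨u, hu⟩ := coeff_support_nonempty_iff.2 <|
    hcoset.trans_ne (mul_ne_zero hne (pow_ne_zero 2 hf))
  obtain ⟨hu, hum⟩ := (mem_support_filter _).1 hu
  simpa using U.sub_mem (h3 hu) hum

end AddMonoidAlgebra

lemma Finset.exists_nonneg_sum_insert_smul_eq {K V ι : Type*} [Semiring K] [PartialOrder K]
    [AddCommMonoid V] [Module K V] [DecidableEq ι] {w : ι → V} {s : Finset ι} {i : ι}
    (hi : i ∉ s) {x : V} {c : ι → K} {μ : K} (hc : ∀ j ∈ s, 0 ≤ c j) (hμ : 0 ≤ μ)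
    (hx : ∑ j ∈ s, c j • w j + μ • w i = x) :
    ∃ c : ι → K, (∀ j ∈ insert i s, 0 ≤ c j) ∧ ∑ j ∈ insert i s, c j • w j = x := by
  have hsi : ∀ j ∈ s, Function.update c i μ j = c j := fun j hj ↦
    Function.update_of_ne (ne_of_mem_of_not_mem hj hi) _ _
  refine ⟨Function.update c i μ, Finset.forall_mem_insert _ _ _ |>.2 ⟨?_, fun j hj ↦ ?_⟩, ?_⟩
  · rwa [Function.update_self]
  · rw [hsi j hj]; exact hc j hj
  · rw [Finset.sum_insert hi, Function.update_self, Finset.sum_congr rfl fun j hj ↦ by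
      rw [hsi j hj], add_comm, hx]

theorem exists_nonneg_sum_smul_eq_or_exists_dual_neg {K V ι : Type*} [Field K] [LinearOrder K]
    [IsStrictOrderedRing K] [AddCommGroup V] [Module K V] (w : ι → V) (s : Finset ι) (x : V) :
    (∃ c : ι → K, (∀ i ∈ s, 0 ≤ c i) ∧ ∑ i ∈ s, c i • w i = x) ∨
      ∃ y : Module.Dual K V, (∀ i ∈ s, 0 ≤ y (w i)) ∧ y x < 0 := by
  classical
  induction s using Finset.induction_on generalizing w x with
  | empty =>
    by_cases hx : x = 0
    · exact .inl ⟨0, by simp, by simp [hx]⟩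
    obtain ⟨y, hy⟩ : ∃ y : Module.Dual K V, y x ≠ 0 := by
      by_contra! h
      exact hx ((Module.forall_dual_apply_eq_zero_iff K x).1 h)
    rcases hy.lt_or_gt with hy | hy
    · exact .inr ⟨y, by simp, hy⟩
    · exact .inr ⟨-y, by simp, by simpa using hy⟩
  | insert i s hi ih =>
    rcases ih w x with ⟨c, hc, hcx⟩ | ⟨y, hy, hyx⟩
    · exact .inl <| Finset.exists_nonneg_sum_insert_smul_eq (w := w) hi hc le_rfl
        (by rw [zero_smul, add_zero, hcx])
    rcases le_or_gt 0 (y (w i)) with hyi | hyi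
    · exact .inr ⟨y, Finset.forall_mem_insert _ _ _ |>.2 ⟨hyi, hy⟩, hyx⟩
    set v := w i
    -- the projection along `v` onto `ker y`
    let π : V →ₗ[K] V := LinearMap.id - (y v)⁻¹ • y.smulRight v
    have hπ : ∀ t, π t = t - ((y v)⁻¹ * y t) • v := fun t ↦ by simp [π, mul_smul]
    rcases ih (π ∘ w) (π x) with ⟨c, hc, hcx⟩ | ⟨z, hz, hzx⟩
    · set r := x - ∑ j ∈ s, c j • w j
      have hr : ((y v)⁻¹ * y r) • v = r := by
        have : π r = 0 := by simp [r, map_sum, ← hcx]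
        rwa [hπ, sub_eq_zero, eq_comm] at this
      have hyr : y r < 0 := by
        have := Finset.sum_nonneg fun j hj ↦ mul_nonneg (hc j hj) (hy j hj)
        simp only [r, map_sub, map_sum, map_smul, smul_eq_mul]
        linarith
      exact .inl <| Finset.exists_nonneg_sum_insert_smul_eq hi hc
        (mul_nonneg_of_nonpos_of_nonpos (inv_nonpos.2 hyi.le) hyr.le)
        (by rw [hr, add_sub_cancel])
    · refine .inr ⟨z ∘ₗ π, Finset.forall_mem_insert _ _ _ |>.2 ⟨?_, hz⟩, hzx⟩
      simp [hπ, v, hyi.ne]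

lemma Finset.exists_pos_nat_mul_eq_natCast {ι : Type*} (s : Finset ι) (c : ι → ℚ)
    (hc : ∀ i ∈ s, 0 ≤ c i) : ∃ N : ℕ, 0 < N ∧ ∀ i ∈ s, ∃ d : ℕ, (d : ℚ) = N * c i := by
  refine ⟨∏ i ∈ s, (c i).den, Finset.prod_pos fun i _ ↦ (c i).den_pos, fun i hi ↦ ?_⟩
  obtain ⟨l, hl⟩ := Finset.dvd_prod_of_mem (fun j ↦ (c j).den) hi
  refine ⟨l * (c i).num.toNat, ?_⟩
  have hnum : (((c i).num.toNat : ℤ) : ℚ) = (c i).num :=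
    congrArg _ (Int.toNat_of_nonneg (Rat.num_nonneg.2 (hc i hi)))
  rw [hl]
  push_cast at hnum ⊢
  rw [hnum, ← Rat.den_mul_eq_num]
  ring

section TorsionFree

variable {M V : Type*} [AddCommGroup M] [AddCommGroup V] [Module ℚ V] {e : M →+ V}

theorem exists_nsmul_mem_closure_or_exists_addMonoidHom_neg (he : Function.Injective e)
    (F : Finset M) (x : M) :
    (∃ N : ℕ, 0 < N ∧ N • x ∈ AddSubmonoid.closure (F : Set M)) ∨
      ∃ y : M →+ ℚ, (∀ a ∈ F, 0 ≤ y a) ∧ y x < 0 := by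
  rcases exists_nonneg_sum_smul_eq_or_exists_dual_neg (K := ℚ) e F (e x) with
    ⟨c, hc, hcx⟩ | ⟨y, hy, hyx⟩
  · obtain ⟨N, hN, hd⟩ := F.exists_pos_nat_mul_eq_natCast c hc
    choose! d hd using hd
    have : N • x = ∑ a ∈ F, d a • a := he <| by
      rw [map_nsmul, ← hcx, map_sum, ← Nat.cast_smul_eq_nsmul ℚ, Finset.smul_sum]
      refine Finset.sum_congr rfl fun a ha ↦ ?_
      rw [map_nsmul, ← Nat.cast_smul_eq_nsmul ℚ, hd a ha, smul_smul]
    exact .inl ⟨N, hN, this ▸ sum_mem fun a ha ↦ nsmul_mem (AddSubmonoid.subset_closure ha) _⟩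
  · exact .inr ⟨y.toAddMonoidHom.comp e, hy, hyx⟩

theorem exists_addMonoidHom_exposing_face (he : Function.Injective e) (F : Finset M) (m : M) :
    ∃ Y : M →+ ℚ, (∀ a ∈ F, 0 ≤ Y a) ∧ Y m ≤ 0 ∧
      ∀ a ∈ F, Y a = 0 → ∃ t : ℕ, t • m - a ∈ AddSubmonoid.closure (F : Set M) := by
  classical
  -- `Y` is the sum of Farkas certificates for the generators `a` with `-a ∉ cone (F ∪ {-m})`
  have key : ∀ a ∈ F, ∃ y : M →+ ℚ, (∀ b ∈ F, 0 ≤ y b) ∧ y m ≤ 0 ∧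
      (y a = 0 → ∃ t : ℕ, t • m - a ∈ AddSubmonoid.closure (F : Set M)) := by
    intro a ha
    rcases exists_nsmul_mem_closure_or_exists_addMonoidHom_neg he (insert (-m) F) (-a) with
      ⟨N, hN, hNa⟩ | ⟨y, hy, hya⟩
    · refine ⟨0, by simp, le_rfl, fun _ ↦ ?_⟩
      rw [Finset.coe_insert, Set.insert_eq, AddSubmonoid.closure_union,
        AddSubmonoid.mem_sup] at hNa
      obtain ⟨y, hy, z, hz, h⟩ := hNa
      obtain ⟨t, rfl⟩ := AddSubmonoid.mem_closure_singleton.1 hy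
      obtain ⟨N, rfl⟩ := Nat.exists_eq_add_of_lt hN
      refine ⟨t, ?_⟩
      convert add_mem hz (nsmul_mem (AddSubmonoid.subset_closure ha) N) using 1
      linear_combination (norm := module) -h
    · refine ⟨y, fun b hb ↦ hy b (Finset.mem_insert_of_mem hb), ?_, fun h ↦ ?_⟩
      · simpa using hy (-m) (Finset.mem_insert_self _ _)
      · simp [h] at hya
  choose! y hyF hym hya using key
  refine ⟨∑ a ∈ F, y a, fun b hb ↦ ?_, ?_, fun a ha h ↦ hya a ha ?_⟩
  · simpa using Finset.sum_nonneg fun a ha ↦ hyF a ha b hb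
  · simpa using Finset.sum_nonpos fun a ha ↦ hym a ha
  · simp only [AddMonoidHom.finsetSum_apply] at h
    exact (Finset.sum_eq_zero_iff_of_nonneg fun b hb ↦ hyF b hb a ha).1 h a ha

open AddSubmonoid AddMonoidAlgebra in
theorem eventually_nsmul_mem_closure_of_mem_support {k : Type*} [Semiring k] [NoZeroDivisors k]
    (he : Function.Injective e) (F : Finset M) {f : AddMonoidAlgebra k M}
    (h2 : ((f ^ 2).coeff.support : Set M) ⊆ closure (F : Set M))
    (h3 : ((f ^ 3).coeff.support : Set M) ⊆ closure (F : Set M))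
    {m : M} (hm : m ∈ f.coeff.support) : ∀ᶠ N : ℕ in atTop, N • m ∈ closure (F : Set M) := by
  classical
  have : UniqueSums M := .of_injective_addHom e.toAddHom he inferInstance
  obtain ⟨Y, hYF, hYm, hface⟩ := exists_addMonoidHom_exposing_face he F m
  have hYf2 : ∀ x ∈ (f * f).coeff.support, 0 ≤ Y x := fun x hx ↦
    map_nonneg_of_mem_closure Y hYF (h2 (pow_two f ▸ hx))
  have hYf : ∀ x ∈ f.coeff.support, 0 ≤ Y x := fun x hx ↦
    map_nonneg_of_mem_support_of_mul_self Y hYf2 hx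
  set P := closure {a ∈ (F : Set M) | Y a = 0}
  have hfilter_sub : ∀ n, ((f ^ n).coeff.support : Set M) ⊆ closure (F : Set M) →
      ((filter (Y · = 0) (f ^ n)).coeff.support : Set M) ⊆ AddSubgroup.closure (P : Set M) :=
    fun n h u hu ↦ have hu := (mem_support_filter _).1 hu
      AddSubgroup.subset_closure (mem_closure_setOf_map_eq_zero Y hYF (h hu.1) hu.2)
  have hmP : m ∈ AddSubgroup.closure (P : Set M) := by
    refine support_subset_of_pow_two_of_pow_three (f := filter (Y · = 0) f) _ ?_ ?_
      ((mem_support_filter _).2 ⟨hm, le_antisymm hYm (hYf m hm)⟩)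
    · rw [pow_two, ← filter_mul_of_nonneg Y hYf hYf, ← pow_two]
      exact hfilter_sub 2 h2
    · rw [pow_three, ← filter_mul_of_nonneg Y hYf hYf, ← filter_mul_of_nonneg Y hYf hYf2,
        ← pow_three]
      exact hfilter_sub 3 h3
  obtain ⟨a, ha, b, hb, rfl⟩ := exists_sub_eq_of_mem_addSubgroupClosure hmP
  have hPF : P ≤ closure (F : Set M) := closure_mono fun x hx ↦ hx.1
  obtain ⟨q, hq⟩ := exists_nsmul_sub_mem_of_mem_closure (fun x hx ↦ hface x hx.1 hx.2) hb
  exact eventually_nsmul_mem_of_add_mem_of_nsmul_sub_mem (hPF hb) (by simpa using hPF ha) hq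

end TorsionFree

theorem monoidAlgebra_seminormal_iff_semisaturated_general
    (k : Type*) [Field k] (n : ℕ)
    (S : AddSubmonoid (Fin n → ℤ))
    (A : Set (AddMonoidAlgebra k (Fin n → ℤ)))
    (hA : A = {f : AddMonoidAlgebra k (Fin n → ℤ) |
      (f.coeff.support : Set (Fin n → ℤ)) ⊆ (S : Set (Fin n → ℤ))}) :
    (∀ f : AddMonoidAlgebra k (Fin n → ℤ), f ^ 2 ∈ A → f ^ 3 ∈ A → f ∈ A) ↔
    (∀ m : Fin n → ℤ, 2 • m ∈ S → 3 • m ∈ S → m ∈ S) := by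
  subst hA
  refine ⟨fun hsn m h2m h3m ↦ ?_, fun hS f h2 h3 m hm ↦ ?_⟩
  · simpa using hsn (AddMonoidAlgebra.single m 1) (by simpa [AddMonoidAlgebra.single_pow])
      (by simpa [AddMonoidAlgebra.single_pow])
  classical
  let F := (f ^ 2).coeff.support ∪ (f ^ 3).coeff.support
  have hFS : AddSubmonoid.closure (F : Set (Fin n → ℤ)) ≤ S :=
    AddSubmonoid.closure_le.2 (by simpa [F] using ⟨h2, h3⟩)
  have hcast : Function.Injective ((Int.castAddHom ℚ).compLeft (Fin n)) :=
    fun x y h ↦ funext fun i ↦ Int.cast_injective (congrFun h i)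
  refine AddSubmonoid.IsSemisaturated.mem_of_eventually_nsmul_mem hS <|
    (eventually_nsmul_mem_closure_of_mem_support hcast F ?_ ?_ hm).mono fun N hN ↦ hFS hN
  all_goals exact fun u hu ↦ AddSubmonoid.subset_closure (by simp [F, Finset.mem_coe.1 hu])

/-- Let `k` be an algebraically closed field, `M = ℤ^n` and `S ⊆ M` a finitely
generated submonoid generating `M` as a group.  Then the subalgebra
`k[S] = {f ∈ k[M] | supp f ⊆ S}` is seminormal in the group algebra `k[M]`
if and only if `S` is semisaturated in `M`. -/
theorem monoidAlgebra_seminormal_iff_semisaturated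
    (k : Type*) [Field k] [IsAlgClosed k] (n : ℕ) (hn : 1 ≤ n)
    (S : AddSubmonoid (Fin n → ℤ))
    (hfg : ∃ F : Finset (Fin n → ℤ), AddSubmonoid.closure (F : Set (Fin n → ℤ)) = S)
    (hgen : AddSubgroup.closure (S : Set (Fin n → ℤ)) = ⊤)
    (A : Set (AddMonoidAlgebra k (Fin n → ℤ)))
    (hA : A = {f : AddMonoidAlgebra k (Fin n → ℤ) |
      (f.coeff.support : Set (Fin n → ℤ)) ⊆ (S : Set (Fin n → ℤ))}) :
    (∀ f : AddMonoidAlgebra k (Fin n → ℤ), f ^ 2 ∈ A → f ^ 3 ∈ A → f ∈ A) ↔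
    (∀ m : Fin n → ℤ, 2 • m ∈ S → 3 • m ∈ S → m ∈ S) :=
  monoidAlgebra_seminormal_iff_semisaturated_general k n S A hA
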